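/- Let k be even, d ≥ 1, Φ a k-XOR instance with m constraints and constraints polynomial f^Φ, let R be a matrix representation of (f^Φ)^d, D the diagonal matrix of re-scaling factors √(hist(I)!), and N = D^{-1} R D^{-1}. Then for every x ∈ {±1}^n, |sat_Φ(x) − 1/2| ≤ (1/(2m)) · (‖N‖ · ∑_{I ∈ [n]^{kd/2}} hist(I)!)^{1/d}. -/

import Mathlib

open Matrix

/-- The spectral (operator) norm of a real matrix. -/
noncomputable def specNorm {ι : Type*} [Fintype ι] [DecidableEq ι] (M : Matrix ι ι ℝ) : ℝ :=
  ‖Matrix.toEuclideanCLM (𝕜 := ℝ) M‖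

/-- The vector flattening of the `q`-fold tensor power of `x`. -/
def tensPow {n q : ℕ} (x : Fin n → ℝ) : (Fin q → Fin n) → ℝ :=
  fun I => ∏ t, x (I t)

/-- `hist(I)!`, the product of factorials of the multiplicities in the tuple `I`. -/
def histFact {n q : ℕ} (I : Fin q → Fin n) : ℕ :=
  ∏ i : Fin n, (Finset.univ.filter (fun j => I j = i)).card.factorial

/-!
Write `R = D N D`. For `x ∈ {±1}ⁿ` the tensor power `v = x^{⊗kd/2}` has entries `±1`, so
`(f x)^d = vᵀ R v = (D v)ᵀ N (D v)` is at most `‖N‖ ‖D v‖² = ‖N‖ ∑_I hist(I)!` in absolute value.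
Taking `d`-th roots bounds `|f x|`, and for `±1` assignments `f x = 2 · #sat − m`.
-/

section Signs

lemma prod_eq_one_or_neg_one {α : Type*} (s : Finset α) (g : α → ℝ)
    (hg : ∀ t ∈ s, g t = 1 ∨ g t = -1) : ∏ t ∈ s, g t = 1 ∨ ∏ t ∈ s, g t = -1 := by
  refine Finset.prod_induction g (fun y => y = 1 ∨ y = -1) ?_ (Or.inl rfl) hg
  rintro _ _ (rfl | rfl) (rfl | rfl) <;> norm_num

lemma tensPow_sq_eq_one {n q : ℕ} {x : Fin n → ℝ} (hx : ∀ i, x i = 1 ∨ x i = -1)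
    (I : Fin q → Fin n) : tensPow x I ^ 2 = 1 := by
  rcases prod_eq_one_or_neg_one Finset.univ (fun t => x (I t)) (fun t _ => hx (I t)) with h | h <;>
    simp [tensPow, h]

/-- An XOR constraint with sign `η a` contributes `+1` when satisfied and `-1` otherwise. -/
lemma sum_mul_eq_two_mul_card_sub {α : Type*} [Fintype α] (η p : α → ℝ)
    (hη : ∀ a, η a = 1 ∨ η a = -1) (hp : ∀ a, p a = 1 ∨ p a = -1) :
    ∑ a, η a * p a = 2 * (Finset.univ.filter (fun a => p a = η a)).card - Fintype.card α := by
  have hterm : ∀ a, η a * p a = 2 * (if p a = η a then 1 else 0) - 1 := by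
    intro a
    rcases hη a with h₁ | h₁ <;> rcases hp a with h₂ | h₂ <;> norm_num [h₁, h₂]
  simp only [hterm, Finset.sum_sub_distrib, ← Finset.mul_sum, Finset.sum_boole,
    Finset.sum_const, Finset.card_univ, nsmul_eq_mul, mul_one]

end Signs

section QuadraticForm

variable {ι : Type*} [Fintype ι] [DecidableEq ι]

lemma abs_dotProduct_mulVec_le_specNorm (M : Matrix ι ι ℝ) (w : ι → ℝ) :
    |w ⬝ᵥ M *ᵥ w| ≤ specNorm M * ∑ i, w i ^ 2 := by
  set w' : EuclideanSpace ℝ ι := WithLp.toLp 2 w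
  have hinner : w ⬝ᵥ M *ᵥ w = inner ℝ w' (Matrix.toEuclideanCLM (𝕜 := ℝ) M w') := by
    simp [w', Matrix.toEuclideanCLM_toLp, PiLp.inner_apply, dotProduct, mul_comm]
  have hnorm : ‖w'‖ * ‖w'‖ = ∑ i, w i ^ 2 := by
    rw [EuclideanSpace.norm_eq, Real.mul_self_sqrt (by positivity)]
    simp [w', sq_abs]
  calc |w ⬝ᵥ M *ᵥ w|
      ≤ ‖w'‖ * ‖Matrix.toEuclideanCLM (𝕜 := ℝ) M w'‖ := hinner ▸ abs_real_inner_le_norm _ _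
    _ ≤ ‖w'‖ * (specNorm M * ‖w'‖) := by
        gcongr; exact (Matrix.toEuclideanCLM (𝕜 := ℝ) M).le_opNorm w'
    _ = specNorm M * ∑ i, w i ^ 2 := by rw [← hnorm]; ring

lemma dotProduct_diagonal_mul_mul_diagonal_mulVec (s : ι → ℝ) (N : Matrix ι ι ℝ) (v : ι → ℝ) :
    v ⬝ᵥ (diagonal s * N * diagonal s) *ᵥ v = (s * v) ⬝ᵥ N *ᵥ (s * v) := by
  have hsv : diagonal s *ᵥ v = s * v := funext (mulVec_diagonal s v)
  have hvs : v ᵥ* diagonal s = s * v := funext fun i => by simp [vecMul_diagonal, mul_comm]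
  rw [← mulVec_mulVec, ← mulVec_mulVec, hsv, dotProduct_mulVec, hvs]

lemma abs_dotProduct_mulVec_le_specNorm_rescaled (s : ι → ℝ) (hs : ∀ i, s i ≠ 0)
    (R : Matrix ι ι ℝ) (v : ι → ℝ) :
    |v ⬝ᵥ R *ᵥ v| ≤
      specNorm ((diagonal s)⁻¹ * R * (diagonal s)⁻¹) * ∑ i, (s i * v i) ^ 2 := by
  have hunit : IsUnit (diagonal s).det := by
    rw [det_diagonal]
    exact (Finset.prod_ne_zero_iff.mpr fun i _ => hs i).isUnit
  have hR : R = diagonal s * ((diagonal s)⁻¹ * R * (diagonal s)⁻¹) * diagonal s := by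
    rw [show diagonal s * ((diagonal s)⁻¹ * R * (diagonal s)⁻¹) * diagonal s
        = (diagonal s * (diagonal s)⁻¹) * R * ((diagonal s)⁻¹ * diagonal s) by noncomm_ring,
      mul_nonsing_inv _ hunit, nonsing_inv_mul _ hunit, one_mul, mul_one]
  conv_lhs => rw [hR, dotProduct_diagonal_mul_mul_diagonal_mulVec]
  exact abs_dotProduct_mulVec_le_specNorm _ _

end QuadraticForm

lemma histFact_pos {n q : ℕ} (I : Fin q → Fin n) : 0 < histFact I :=
  Finset.prod_pos fun _ _ => Nat.factorial_pos _

lemma abs_tensPow_dotProduct_mulVec_le {n q : ℕ}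
    (R : Matrix (Fin q → Fin n) (Fin q → Fin n) ℝ) {x : Fin n → ℝ}
    (hx : ∀ i, x i = 1 ∨ x i = -1) :
    |tensPow x ⬝ᵥ R *ᵥ tensPow x| ≤
      specNorm ((diagonal fun I => √(histFact I : ℝ))⁻¹ * R *
        (diagonal fun I => √(histFact I : ℝ))⁻¹) * ∑ I : Fin q → Fin n, (histFact I : ℝ) := by
  have hpos : ∀ I : Fin q → Fin n, (0 : ℝ) < histFact I := fun I => by
    exact_mod_cast histFact_pos I
  convert abs_dotProduct_mulVec_le_specNorm_rescaled _ (fun I => (Real.sqrt_pos.mpr (hpos I)).ne')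
    R (tensPow x) using 3 with I
  rw [mul_pow, tensPow_sq_eq_one hx, mul_one, Real.sq_sqrt (hpos I).le]

lemma abs_le_rpow_one_div_of_pow_le {a B : ℝ} {d : ℕ} (hd : d ≠ 0) (h : |a| ^ d ≤ B) :
    |a| ≤ B ^ ((1 : ℝ) / d) := by
  have hB : 0 ≤ B := (pow_nonneg (abs_nonneg a) d).trans h
  rw [one_div, Real.le_rpow_inv_iff_of_pos (abs_nonneg a) hB (by positivity), Real.rpow_natCast]
  exact h

theorem rescaled_refutation_certificate_general {n k m d : ℕ} (hd : 1 ≤ d) (hm : 0 < m)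
    (S : Fin m → Fin k → Fin n) (η : Fin m → ℝ) (hη : ∀ a, η a = 1 ∨ η a = -1)
    (f : (Fin n → ℝ) → ℝ)
    (hf : ∀ x : Fin n → ℝ, f x = ∑ a, η a * ∏ i, x (S a i))
    (R : Matrix (Fin (k * d / 2) → Fin n) (Fin (k * d / 2) → Fin n) ℝ)
    (hrep : ∀ x : Fin n → ℝ, (f x) ^ d = dotProduct (tensPow x) (R.mulVec (tensPow x)))
    (D : Matrix (Fin (k * d / 2) → Fin n) (Fin (k * d / 2) → Fin n) ℝ)
    (hD : D = Matrix.diagonal (fun I => Real.sqrt (histFact I)))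
    (N : Matrix (Fin (k * d / 2) → Fin n) (Fin (k * d / 2) → Fin n) ℝ)
    (hN : N = D⁻¹ * R * D⁻¹) :
    ∀ x : Fin n → ℝ, (∀ i, x i = 1 ∨ x i = -1) →
      |((Finset.univ.filter (fun a : Fin m => (∏ i, x (S a i)) = η a)).card : ℝ) / m - 1 / 2| ≤
        (1 / (2 * m)) *
          (specNorm N * ∑ I : Fin (k * d / 2) → Fin n, (histFact I : ℝ)) ^ ((1 : ℝ) / d) := by
  intro x hx
  have hcount : f x = 2 * (Finset.univ.filter (fun a => (∏ i, x (S a i)) = η a)).card - m := by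
    rw [hf x, sum_mul_eq_two_mul_card_sub η _ hη
      (fun a => prod_eq_one_or_neg_one _ _ fun i _ => hx (S a i)), Fintype.card_fin]
  have hpow : |f x| ^ d ≤ specNorm N * ∑ I : Fin (k * d / 2) → Fin n, (histFact I : ℝ) := by
    rw [← abs_pow, hrep x, hN, hD]
    exact abs_tensPow_dotProduct_mulVec_le R hx
  have hm' : (0 : ℝ) < m := Nat.cast_pos.mpr hm
  calc _ = |f x / (2 * m)| := by rw [hcount]; congr 1; field_simp
    _ = 1 / (2 * m) * |f x| := by
        rw [abs_div, abs_of_pos (by positivity : (0 : ℝ) < 2 * m)]; ring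
    _ ≤ _ := by
        gcongr
        exact abs_le_rpow_one_div_of_pow_le (by omega) hpow

/-- Strong refutation certificate via the re-scaled matrix representation:
for a `k`-XOR instance with `m` constraints and constraints polynomial `f`,
if `R` represents `f^d` and `N = D⁻¹ R D⁻¹` with `D = diag(√(hist(I)!))`, then
`|sat_Φ(x) − 1/2| ≤ (1/(2m)) (‖N‖ ∑_I hist(I)!)^{1/d}` for every `x ∈ {±1}ⁿ`. -/
theorem rescaled_refutation_certificate {n k m d : ℕ} (hk : Even k) (hd : 1 ≤ d) (hm : 0 < m)
    (S : Fin m → Fin k → Fin n) (η : Fin m → ℝ) (hη : ∀ a, η a = 1 ∨ η a = -1)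
    (f : (Fin n → ℝ) → ℝ)
    (hf : ∀ x : Fin n → ℝ, f x = ∑ a, η a * ∏ i, x (S a i))
    (R : Matrix (Fin (k * d / 2) → Fin n) (Fin (k * d / 2) → Fin n) ℝ)
    (hrep : ∀ x : Fin n → ℝ, (f x) ^ d = dotProduct (tensPow x) (R.mulVec (tensPow x)))
    (D : Matrix (Fin (k * d / 2) → Fin n) (Fin (k * d / 2) → Fin n) ℝ)
    (hD : D = Matrix.diagonal (fun I => Real.sqrt (histFact I)))
    (N : Matrix (Fin (k * d / 2) → Fin n) (Fin (k * d / 2) → Fin n) ℝ)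
    (hN : N = D⁻¹ * R * D⁻¹) :
    ∀ x : Fin n → ℝ, (∀ i, x i = 1 ∨ x i = -1) →
      |((Finset.univ.filter (fun a : Fin m => (∏ i, x (S a i)) = η a)).card : ℝ) / m - 1 / 2| ≤
        (1 / (2 * m)) *
          (specNorm N * ∑ I : Fin (k * d / 2) → Fin n, (histFact I : ℝ)) ^ ((1 : ℝ) / d) :=
  rescaled_refutation_certificate_general hd hm S η hη f hf R hrep D hD N hN
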